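/- arXiv:1703.09965 — 5 statements merged into one kernel-verified Lean document; each statement's English description precedes it below -/
import Mathlib

section
/- Let p ≥ 2 and let x₁, …, x_p be vectors in ℝⁿ, each of norm 1, such that |⟨xᵢ, x₁⟩| > √2/2 for every i = 2, …, p. Then there exist signs ε₁, …, ε_p ∈ {1, −1} such that ⟨εᵢ xᵢ, ε_j x_j⟩ > 0 for every pair i ≠ j; that is, some choice of exactly one element from each pair {x_j, −x_j} yields a set of vectors in which every pair has positive inner product (an all-positive-correlations arrangement). -/
/-!
After flipping each `xᵢ` so that `⟪xᵢ, x₁⟫ ≥ 0`, every vector lies within 45° of the unit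
vector `e = x₁`, and any two such vectors are at an acute angle: writing `y = ⟪y, e⟫ e + r`,
the 45° condition gives `‖r‖ < ⟪y, e⟫`, so by Cauchy–Schwarz
`⟪y, z⟫ = ⟪y, e⟫ ⟪z, e⟫ + ⟪r, s⟫ ≥ ⟪y, e⟫ ⟪z, e⟫ - ‖r‖ ‖s‖ > 0`.
-/

open RealInnerProductSpace

section

variable {E : Type*} [NormedAddCommGroup E] [InnerProductSpace ℝ E]

theorem real_inner_eq_mul_add_inner_sub_smul {e : E} (he : ‖e‖ = 1) (y z : E) :
    ⟪y, z⟫ = ⟪y, e⟫ * ⟪z, e⟫ + ⟪y - ⟪y, e⟫ • e, z - ⟪z, e⟫ • e⟫ := by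
  simp only [inner_sub_left, inner_sub_right, real_inner_smul_left, real_inner_smul_right,
    real_inner_self_eq_norm_sq, he, real_inner_comm e]
  ring

theorem norm_sub_inner_smul_sq {e : E} (he : ‖e‖ = 1) (y : E) :
    ‖y - ⟪y, e⟫ • e‖ ^ 2 = ‖y‖ ^ 2 - ⟪y, e⟫ ^ 2 := by
  rw [← real_inner_self_eq_norm_sq, ← real_inner_self_eq_norm_sq y,
    real_inner_eq_mul_add_inner_sub_smul he y y]
  ring

theorem norm_sub_inner_smul_lt_inner {e y : E} (he : ‖e‖ = 1)
    (hy : √2 / 2 * ‖y‖ < ⟪y, e⟫) : ‖y - ⟪y, e⟫ • e‖ < ⟪y, e⟫ := by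
  have hsqrt : √2 ^ 2 = 2 := Real.sq_sqrt zero_le_two
  have hpos : 0 < ⟪y, e⟫ := lt_of_le_of_lt (by positivity) hy
  have hsq : ‖y‖ ^ 2 < 2 * ⟪y, e⟫ ^ 2 := by
    nlinarith [mul_self_lt_mul_self (by positivity) hy]
  apply lt_of_pow_lt_pow_left₀ 2 hpos.le
  rw [norm_sub_inner_smul_sq he]
  linarith

theorem real_inner_pos_of_close_to_unit {e y z : E} (he : ‖e‖ = 1)
    (hy : √2 / 2 * ‖y‖ < ⟪y, e⟫) (hz : √2 / 2 * ‖z‖ < ⟪z, e⟫) : 0 < ⟪y, z⟫ := by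
  have hr := norm_sub_inner_smul_lt_inner he hy
  have hs := norm_sub_inner_smul_lt_inner he hz
  calc 0 < ⟪y, e⟫ * ⟪z, e⟫ - ‖y - ⟪y, e⟫ • e‖ * ‖z - ⟪z, e⟫ • e‖ :=
        sub_pos.2 (mul_lt_mul'' hr hs (norm_nonneg _) (norm_nonneg _))
    _ ≤ ⟪y, e⟫ * ⟪z, e⟫ + ⟪y - ⟪y, e⟫ • e, z - ⟪z, e⟫ • e⟫ := by
        linarith [neg_le_of_abs_le (abs_real_inner_le_norm (y - ⟪y, e⟫ • e) (z - ⟪z, e⟫ • e))]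
    _ = ⟪y, z⟫ := (real_inner_eq_mul_add_inner_sub_smul he y z).symm

end

theorem exists_sign_mul_eq_abs (a : ℝ) : ∃ ε : ℝ, (ε = 1 ∨ ε = -1) ∧ ε * a = |a| := by
  rcases le_or_gt 0 a with h | h
  · exact ⟨1, .inl rfl, by rw [one_mul, abs_of_nonneg h]⟩
  · exact ⟨-1, .inr rfl, by rw [neg_one_mul, abs_of_neg h]⟩

/-- If `p ≥ 2` unit vectors in `ℝⁿ` each have `|⟨xᵢ, x₁⟩| > √2/2`
(with `x₁ = x ⟨0,_⟩`), then there is a choice of signs `εᵢ ∈ {1, -1}` making all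
pairwise inner products of the `εᵢ • xᵢ` positive (an APC arrangement). -/
theorem apc_arrangement_exists (n p : ℕ) (hp : 2 ≤ p)
    (x : Fin p → EuclideanSpace ℝ (Fin n))
    (hnorm : ∀ i, ‖x i‖ = 1)
    (hcorr : ∀ i : Fin p, i ≠ ⟨0, by omega⟩ →
      |(inner ℝ (x i) (x ⟨0, by omega⟩) : ℝ)| > Real.sqrt 2 / 2) :
    ∃ ε : Fin p → ℝ, (∀ i, ε i = 1 ∨ ε i = -1) ∧
      ∀ i j : Fin p, i ≠ j → (0 : ℝ) < inner ℝ (ε i • x i) (ε j • x j) := by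
  set e := x ⟨0, by omega⟩
  have he : ‖e‖ = 1 := hnorm _
  choose ε hε hεe using fun i => exists_sign_mul_eq_abs ⟪x i, e⟫
  have hflip : ∀ i, √2 / 2 * ‖ε i • x i‖ < ⟪ε i • x i, e⟫ := by
    intro i
    have hunit : ‖ε i • x i‖ = 1 := by
      rcases hε i with h | h <;> simp [h, hnorm]
    rw [hunit, mul_one, real_inner_smul_left, hεe]
    by_cases hi : i = ⟨0, by omega⟩
    · have hsqrt : √2 < 2 := by
        rw [Real.sqrt_lt' two_pos]; norm_num
      rw [hi, real_inner_self_eq_norm_sq, he, one_pow, abs_one]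
      linarith
    · exact hcorr i hi
  exact ⟨ε, hε, fun i j _ => real_inner_pos_of_close_to_unit he (hflip i) (hflip j)⟩
end

section
/- Let p ≥ 2 be an integer and r a real number with 0 < r < 1. For every vector w ∈ ℝ^p with wᵢ ≥ 0 for all i and Σᵢ wᵢ = 1, one has Q(w,r) ≤ (1+(p−2)r)/D(p,r), and equality holds when w is a standard basis vector e_j; that is, among all properly weighted group effects, the individual effects β_j are the hardest to estimate, with variance Q(e_j,r) = (1+(p−2)r)/D(p,r). -/
open Matrix

/-- The `p × p` Gram/correlation matrix of a uniform model at multicollinearity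
level `r`: diagonal entries `1`, off-diagonal entries `r`. -/
noncomputable def unifMat (p : ℕ) (r : ℝ) : Matrix (Fin p) (Fin p) ℝ :=
  fun i j => if i = j then 1 else r

/-- `Q(w,r) = wᵀ A(p,r)⁻¹ w`. -/
noncomputable def Qform (p : ℕ) (r : ℝ) (w : Fin p → ℝ) : ℝ :=
  w ⬝ᵥ (unifMat p r)⁻¹.mulVec w

/-! Writing `A(p,r) = (1 - r) I + r J` with `J` the all-ones matrix and using `J² = p J`, one gets
`A⁻¹ = (I - r / (1 + (p - 1) r) J) / (1 - r)`, hence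
`Q(w,r) = (‖w‖² - r (∑ wᵢ)² / (1 + (p - 1) r)) / (1 - r)`.
On the simplex `∑ wᵢ = 1`, so `Q` is increasing in `‖w‖²`, and `‖w‖² ≤ (∑ wᵢ)² = 1`
with equality at the vertices `e_j`. -/

namespace Matrix

variable {n K : Type*} [Fintype n] [Field K]

theorem vecMulVec_one_one_mul_self :
    (vecMulVec 1 1 * vecMulVec 1 1 : Matrix n n K) = (Fintype.card n : K) • vecMulVec 1 1 := by
  rw [vecMulVec_mul_vecMulVec, one_dotProduct_one, vecMulVec_smul]

theorem inv_smul_one_add_smul_vecMulVec_one_one [DecidableEq n] {a b : K} (ha : a ≠ 0)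
    (hab : a + Fintype.card n * b ≠ 0) :
    (a • 1 + b • vecMulVec 1 1 : Matrix n n K)⁻¹
      = a⁻¹ • (1 - (b / (a + Fintype.card n * b)) • vecMulVec 1 1) := by
  refine inv_eq_right_inv ?_
  simp only [mul_smul_comm, smul_mul_assoc, mul_sub, add_mul, one_mul, mul_one, smul_sub,
    vecMulVec_one_one_mul_self, smul_smul]
  match_scalars
  · field_simp
  · rw [mul_assoc, show a * 1 + b * Fintype.card n * 1 = a + Fintype.card n * b by ring,
      div_mul_cancel₀ b hab]
    ring

theorem dotProduct_vecMulVec_one_one_mulVec (w : n → K) :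
    w ⬝ᵥ (vecMulVec 1 1 : Matrix n n K) *ᵥ w = (∑ i, w i) ^ 2 := by
  rw [vecMulVec_mulVec, op_smul_eq_smul, dotProduct_smul, dotProduct_one, one_dotProduct,
    smul_eq_mul, sq]

end Matrix

theorem unifMat_eq_smul_one_add_smul_vecMulVec (p : ℕ) (r : ℝ) :
    unifMat p r = (1 - r) • 1 + r • vecMulVec 1 1 := by
  ext i j
  by_cases h : i = j <;> simp [unifMat, h, one_apply]

theorem Qform_eq (p : ℕ) {r : ℝ} (hr : r ≠ 1) (hpr : 1 - r + p * r ≠ 0) (w : Fin p → ℝ) :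
    Qform p r w = (w ⬝ᵥ w - r / (1 - r + p * r) * (∑ i, w i) ^ 2) / (1 - r) := by
  have hr' : 1 - r ≠ 0 := sub_ne_zero.mpr hr.symm
  rw [Qform, unifMat_eq_smul_one_add_smul_vecMulVec,
    inv_smul_one_add_smul_vecMulVec_one_one hr' (by simpa using hpr)]
  simp only [smul_mulVec, sub_mulVec, one_mulVec, dotProduct_smul, dotProduct_sub,
    dotProduct_vecMulVec_one_one_mulVec, Fintype.card_fin, smul_eq_mul]
  field_simp

theorem Qform_eq_of_sum_eq_one (p : ℕ) {r : ℝ} (hr0 : 0 ≤ r) (hr1 : r < 1) (w : Fin p → ℝ)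
    (hw : ∑ i, w i = 1) :
    Qform p r w = (1 + ((p : ℝ) - 2) * r) / (1 + ((p : ℝ) - 2) * r - ((p : ℝ) - 1) * r ^ 2)
      - (1 - w ⬝ᵥ w) / (1 - r) := by
  have h1 : 0 < 1 - r := sub_pos.mpr hr1
  have h2 : 0 < 1 - r + p * r := by positivity
  have hD : 1 + ((p : ℝ) - 2) * r - ((p : ℝ) - 1) * r ^ 2 = (1 - r) * (1 - r + p * r) := by ring
  rw [Qform_eq p hr1.ne h2.ne', hw, hD]
  field_simp
  ring

theorem individual_effects_hardest_general (p : ℕ) (r : ℝ)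
    (hr0 : 0 < r) (hr1 : r < 1) :
    (∀ w : Fin p → ℝ, (∀ i, 0 ≤ w i) → (∑ i, w i) = 1 →
      Qform p r w ≤
        (1 + ((p : ℝ) - 2) * r) / (1 + ((p : ℝ) - 2) * r - ((p : ℝ) - 1) * r ^ 2)) ∧
    (∀ j : Fin p, Qform p r (fun i => if i = j then 1 else 0) =
      (1 + ((p : ℝ) - 2) * r) / (1 + ((p : ℝ) - 2) * r - ((p : ℝ) - 1) * r ^ 2)) := by
  constructor
  · intro w hw hsum
    have hww : w ⬝ᵥ w ≤ 1 := by
      simpa [dotProduct, ← sq, hsum] using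
        Finset.sum_sq_le_sq_sum_of_nonneg (s := Finset.univ) fun i _ ↦ hw i
    rw [Qform_eq_of_sum_eq_one p hr0.le hr1 w hsum]
    exact sub_le_self _ (div_nonneg (sub_nonneg.mpr hww) (sub_pos.mpr hr1).le)
  · intro j
    have hej : (fun i => if i = j then (1 : ℝ) else 0) = Pi.single j 1 := by
      ext i; simp [Pi.single_apply]
    rw [hej, Qform_eq_of_sum_eq_one p hr0.le hr1 _ (by simp), single_dotProduct]
    simp

/-- among nonnegative weight vectors summing to 1, the variance
`Q(w,r)` is at most `(1+(p−2)r)/D(p,r)`, with equality at every standard basis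
vector `e_j`; i.e. the individual effects `β_j` are the hardest to estimate. -/
theorem individual_effects_hardest (p : ℕ) (hp : 2 ≤ p) (r : ℝ)
    (hr0 : 0 < r) (hr1 : r < 1) :
    (∀ w : Fin p → ℝ, (∀ i, 0 ≤ w i) → (∑ i, w i) = 1 →
      Qform p r w ≤
        (1 + ((p : ℝ) - 2) * r) / (1 + ((p : ℝ) - 2) * r - ((p : ℝ) - 1) * r ^ 2)) ∧
    (∀ j : Fin p, Qform p r (fun i => if i = j then 1 else 0) =
      (1 + ((p : ℝ) - 2) * r) / (1 + ((p : ℝ) - 2) * r - ((p : ℝ) - 1) * r ^ 2)) :=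
  individual_effects_hardest_general p r hr0 hr1
end

section
/- Let p ≥ 2 be an integer and r a real number with 0 < r < 1. For every vector u ∈ ℝ^p with Σᵢ |uᵢ| = 1, one has Q(u,r) ≤ (1+(p−2)r)/D(p,r); that is, over the entire class of normalized group effects (weight vectors with L¹ norm equal to 1), the maximal estimator variance equals that of an individual effect, attained at the standard basis vectors. -/
open Matrix

/-- over all normalized group effects (`Σᵢ |uᵢ| = 1`), the
estimator variance is at most `(1+(p−2)r)/D(p,r)`, the variance of an
individual effect. -/
theorem Qform_l1_max (p : ℕ) (hp : 2 ≤ p) (r : ℝ) (hr0 : 0 < r) (hr1 : r < 1)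
    (u : Fin p → ℝ) (hu : (∑ i, |u i|) = 1) :
    Qform p r u ≤
      (1 + ((p : ℝ) - 2) * r) / (1 + ((p : ℝ) - 2) * r - ((p : ℝ) - 1) * r ^ 2) := by
  have hp2 : (2:ℝ) ≤ (p:ℝ) := by exact_mod_cast hp
  set D : ℝ := 1 + ((p:ℝ) - 2) * r - ((p:ℝ) - 1) * r ^ 2 with hD
  have hDfac : D = (1 - r) * (1 + ((p:ℝ) - 1) * r) := by rw [hD]; ring
  have hDpos : 0 < D := by
    rw [hDfac]
    apply mul_pos (by linarith) (by nlinarith)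
  have hDne : D ≠ 0 := ne_of_gt hDpos
  set a : ℝ := (1 + ((p:ℝ) - 2) * r) / D with ha
  set b : ℝ := -r / D with hb
  set B : Matrix (Fin p) (Fin p) ℝ := fun i j => if i = j then a else b with hBdef
  have hcard : (Finset.univ : Finset (Fin p)).card = p := by simp
  have hmul : unifMat p r * B = 1 := by
    ext i j
    rw [Matrix.mul_apply, Matrix.one_apply]
    by_cases hij : i = j
    · subst hij
      have hterm : ∀ k : Fin p, unifMat p r i k * B k i
          = r * b + (if k = i then a - r * b else 0) := by
        intro k
        by_cases hk : k = i
        · subst hk; simp [unifMat, hBdef]; try ring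
        · simp [unifMat, hBdef, hk, Ne.symm hk]
      rw [Finset.sum_congr rfl (fun k _ => hterm k), Finset.sum_add_distrib,
        Finset.sum_ite_eq' Finset.univ i, Finset.sum_const, hcard]
      simp only [Finset.mem_univ, if_true, if_pos rfl, nsmul_eq_mul]
      rw [ha, hb]
      field_simp
      rw [hD]; ring
    · have hterm : ∀ k : Fin p, unifMat p r i k * B k j
          = r * b + (if k = i then b - r * b else 0) + (if k = j then r * a - r * b else 0) := by
        intro k
        by_cases hk : k = i
        · subst hk
          simp [unifMat, hBdef, hij, Ne.symm]
        · by_cases hk2 : k = j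
          · subst hk2
            simp [unifMat, hBdef, hk, Ne.symm hk]
          · simp [unifMat, hBdef, hk, hk2, Ne.symm hk]
      rw [Finset.sum_congr rfl (fun k _ => hterm k), Finset.sum_add_distrib,
        Finset.sum_add_distrib, Finset.sum_ite_eq' Finset.univ i,
        Finset.sum_ite_eq' Finset.univ j, Finset.sum_const, hcard]
      simp only [Finset.mem_univ, if_true, if_neg hij, nsmul_eq_mul]
      rw [ha, hb]
      field_simp
      ring
  have hinv : (unifMat p r)⁻¹ = B := Matrix.inv_eq_right_inv hmul
  set S : ℝ := ∑ i, u i with hS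
  set s : ℝ := ∑ i, (u i) ^ 2 with hs
  have hQ : Qform p r u = (a - b) * s + b * S ^ 2 := by
    rw [Qform, hinv]
    have hrow : ∀ i : Fin p, B.mulVec u i = b * S + (a - b) * u i := by
      intro i
      rw [Matrix.mulVec, dotProduct]
      have : ∀ j : Fin p, B i j * u j = b * u j + (if j = i then (a - b) * u i else 0) := by
        intro j
        by_cases hj : j = i
        · subst hj; simp [hBdef]; ring
        · simp [hBdef, hj, Ne.symm hj]
      rw [Finset.sum_congr rfl (fun j _ => this j), Finset.sum_add_distrib,
        Finset.sum_ite_eq' Finset.univ i, ← Finset.mul_sum]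
      simp [hS]
    rw [dotProduct]
    rw [Finset.sum_congr rfl (fun i _ => by rw [hrow i])]
    have : ∀ i : Fin p, u i * (b * S + (a - b) * u i) = b * S * u i + (a - b) * (u i) ^ 2 := by
      intro i; ring
    rw [Finset.sum_congr rfl (fun i _ => this i), Finset.sum_add_distrib,
      ← Finset.mul_sum, ← Finset.mul_sum, ← hS, ← hs]
    ring
  -- inequalities
  have hs1 : s ≤ 1 := by
    have h1 : s = ∑ i, |u i| ^ 2 := by
      rw [hs]; exact Finset.sum_congr rfl (fun i _ => (sq_abs (u i)).symm)
    have h2 : ∑ i, |u i| ^ 2 ≤ (∑ i, |u i|) ^ 2 := by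
      apply Finset.sum_sq_le_sq_sum_of_nonneg
      intro i _; exact abs_nonneg _
    rw [h1, hu] at *
    nlinarith [h2, hu]
  have ht : 2 * s ≤ S ^ 2 + 1 := by
    have e1 : S ^ 2 + 1 = ∑ i, ∑ j, (u i * u j + |u i| * |u j|) := by
      have hu2 : (1:ℝ) = (∑ i, |u i|) ^ 2 := by rw [hu]; ring
      rw [hu2, hS]
      rw [sq, sq, Finset.sum_mul_sum, Finset.sum_mul_sum]
      rw [← Finset.sum_add_distrib]
      exact Finset.sum_congr rfl (fun i _ => by rw [← Finset.sum_add_distrib])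
    have e2 : ∀ i : Fin p, u i * u i + |u i| * |u i| ≤ ∑ j, (u i * u j + |u i| * |u j|) := by
      intro i
      apply Finset.single_le_sum (f := fun j => u i * u j + |u i| * |u j|)
      · intro j _
        have h := neg_abs_le (u i * u j)
        rw [abs_mul] at h
        linarith
      · exact Finset.mem_univ i
    have e3 : ∑ i, (u i * u i + |u i| * |u i|) ≤ S ^ 2 + 1 := by
      rw [e1]; exact Finset.sum_le_sum (fun i _ => e2 i)
    have e4 : ∑ i, (u i * u i + |u i| * |u i|) = 2 * s := by
      rw [hs, Finset.mul_sum]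
      exact Finset.sum_congr rfl (fun i _ => by rw [abs_mul_abs_self]; ring)
    linarith
  -- final
  rw [hQ]
  have heq : (a - b) * s + b * S ^ 2 = ((1 + ((p:ℝ) - 1) * r) * s - r * S ^ 2) / D := by
    rw [ha, hb]; field_simp; ring
  rw [heq, div_le_div_iff_of_pos_right hDpos]
  have k1 : 0 ≤ (1 - s) * (1 - r) := mul_nonneg (by linarith) (by linarith)
  have k2 : 0 ≤ (1 - s) * (((p:ℝ) - 2) * r) :=
    mul_nonneg (by linarith) (mul_nonneg (by linarith) hr0.le)
  have k3 : 0 ≤ r * (S ^ 2 + 1 - 2 * s) := mul_nonneg hr0.le (by linarith)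
  nlinarith [k1, k2, k3]
end

section
/- Let p ≥ 2 be an integer, r a real number with 0 < r < 1, and s ∈ ℝ^p with sᵢ > 0 for all i. For the variability weight vector w_w defined by (w_w)ᵢ = sᵢ / Σ_j s_j, one has Q_S(w_w, r) = p / ( (Σᵢ sᵢ)² · (1+(p−1)r) ); that is, the variance of the minimum-variance unbiased linear estimator of the variability weighted group effect τ_w = Σᵢ (w_w)ᵢ βᵢ under the general uniform model with unit error variance equals p/((Σᵢ sᵢ)²(1+(p−1)r)). -/
open Matrix

/-- `Q_S(w,r) = wᵀ S⁻¹ A(p,r)⁻¹ S⁻¹ w` with `S = diag s`: the variance of the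
minimum-variance unbiased linear estimator of the group effect `ξ(w)` under the
general uniform model (variability `s_j` for variable `j`) with unit error
variance. -/
noncomputable def QSform (p : ℕ) (r : ℝ) (s w : Fin p → ℝ) : ℝ :=
  (fun i => w i / s i) ⬝ᵥ (unifMat p r)⁻¹.mulVec (fun i => w i / s i)

/-! With `J` the all-ones matrix, `A(p,r) = (1 - r) I + r J`, and the all-ones vector `𝟙` is
an eigenvector of `A(p,r)` with eigenvalue `1 + (p - 1) r`, hence of `A(p,r)⁻¹` with the
reciprocal eigenvalue. The variability weights make `S⁻¹ w_w = (Σᵢ sᵢ)⁻¹ 𝟙`, so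
`Q_S(w_w, r) = (Σᵢ sᵢ)⁻² 𝟙ᵀ A(p,r)⁻¹ 𝟙 = p / ((Σᵢ sᵢ)² (1 + (p - 1) r))`.
Invertibility of `A(p,r)` comes from the explicit inverse `a⁻¹ (I - b / (a + p b) J)` of
`a I + b J`, valid since `J² = p J`. -/

namespace Matrix

variable {n K : Type*} [Fintype n] [Field K]

variable (n K) in
def allOnes : Matrix n n K := of fun _ _ => 1

theorem allOnes_mul_self : allOnes n K * allOnes n K = (Fintype.card n : K) • allOnes n K := by
  ext; simp [allOnes, mul_apply]

theorem allOnes_mulVec_one : allOnes n K *ᵥ 1 = (Fintype.card n : K) • 1 := by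
  ext; simp [allOnes, mulVec, dotProduct]

variable [DecidableEq n]

theorem smul_one_add_smul_allOnes_mulVec_one (a b : K) :
    (a • 1 + b • allOnes n K) *ᵥ 1 = (a + Fintype.card n * b) • (1 : n → K) := by
  rw [add_mulVec, smul_mulVec, smul_mulVec, one_mulVec, allOnes_mulVec_one]
  module

theorem smul_one_add_smul_allOnes_mul_inv {a b : K} (ha : a ≠ 0)
    (hab : a + Fintype.card n * b ≠ 0) :
    (a • 1 + b • allOnes n K) *
      (a⁻¹ • (1 - (b / (a + Fintype.card n * b)) • allOnes n K)) = 1 := by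
  simp only [add_mul, mul_sub, one_mul, mul_one, smul_mul, mul_smul_comm, allOnes_mul_self]
  match_scalars <;> simp only [mul_one]
  · exact inv_mul_cancel₀ ha
  · rw [mul_comm b, div_mul_cancel₀ b hab, sub_self, mul_zero]

theorem inv_mulVec_eq_inv_smul {A : Matrix n n K} (hA : IsUnit A.det) {c : K} (hc : c ≠ 0)
    {v : n → K} (h : A *ᵥ v = c • v) : A⁻¹ *ᵥ v = c⁻¹ • v := by
  rw [← inv_smul_smul₀ hc (A⁻¹ *ᵥ v), ← mulVec_smul, ← h, mulVec_mulVec, nonsing_inv_mul A hA,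
    one_mulVec]

end Matrix

theorem unifMat_eq (p : ℕ) (r : ℝ) :
    unifMat p r = (1 - r) • 1 + r • allOnes (Fin p) ℝ := by
  ext i j
  by_cases h : i = j <;> simp [unifMat, allOnes, h, one_apply]

theorem unifMat_inv_mulVec_one {p : ℕ} {r : ℝ} (hr : r ≠ 1)
    (hpr : 1 + ((p : ℝ) - 1) * r ≠ 0) :
    (unifMat p r)⁻¹ *ᵥ 1 = (1 + ((p : ℝ) - 1) * r)⁻¹ • 1 := by
  have hcard : 1 - r + (Fintype.card (Fin p) : ℝ) * r = 1 + ((p : ℝ) - 1) * r := by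
    rw [Fintype.card_fin]; ring
  rw [← hcard] at hpr ⊢
  rw [unifMat_eq]
  refine inv_mulVec_eq_inv_smul ?_ hpr (smul_one_add_smul_allOnes_mulVec_one _ _)
  exact isUnit_det_of_right_inverse
    (smul_one_add_smul_allOnes_mul_inv (sub_ne_zero.mpr hr.symm) hpr)

theorem QSform_div_const {p : ℕ} {r : ℝ} (hr : r ≠ 1) (hpr : 1 + ((p : ℝ) - 1) * r ≠ 0)
    {s : Fin p → ℝ} (hs : ∀ i, s i ≠ 0) (t : ℝ) :
    QSform p r s (fun i => s i / t) = (p : ℝ) / (t ^ 2 * (1 + ((p : ℝ) - 1) * r)) := by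
  have hw : (fun i => s i / t / s i) = t⁻¹ • (1 : Fin p → ℝ) := by
    ext i
    simp [div_div_cancel_left' (hs i)]
  rw [QSform, hw, mulVec_smul, unifMat_inv_mulVec_one hr hpr, smul_dotProduct, dotProduct_smul,
    dotProduct_smul, one_dotProduct_one, Fintype.card_fin]
  simp only [smul_eq_mul]
  field_simp

theorem QS_variability_weight_general (p : ℕ) (r : ℝ)
    (hr0 : 0 < r) (hr1 : r < 1) (s : Fin p → ℝ) (hs : ∀ i, 0 < s i) :
    QSform p r s (fun i => s i / ∑ j, s j) =
      (p : ℝ) / ((∑ i, s i) ^ 2 * (1 + ((p : ℝ) - 1) * r)) := by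
  have hpr : 0 < 1 + ((p : ℝ) - 1) * r := by
    linarith [mul_nonneg (Nat.cast_nonneg p) hr0.le]
  exact QSform_div_const hr1.ne hpr.ne' (fun i => (hs i).ne') _

/-- for the variability weight vector `(w_w)ᵢ = sᵢ/Σ_j s_j`,
`Q_S(w_w, r) = p/((Σᵢ sᵢ)²(1+(p−1)r))`. -/
theorem QS_variability_weight (p : ℕ) (hp : 2 ≤ p) (r : ℝ)
    (hr0 : 0 < r) (hr1 : r < 1) (s : Fin p → ℝ) (hs : ∀ i, 0 < s i) :
    QSform p r s (fun i => s i / ∑ j, s j) =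
      (p : ℝ) / ((∑ i, s i) ^ 2 * (1 + ((p : ℝ) - 1) * r)) :=
  QS_variability_weight_general p r hr0 hr1 s hs
end

section
/- Let p ≥ 2 be an integer, s ∈ ℝ^p with sᵢ > 0 for all i, and σ² > 0. The function r ↦ σ² · Q_S(w_w, r) = σ² p / ((Σᵢ sᵢ)²(1+(p−1)r)) is strictly monotone decreasing on the interval (0,1), and it tends to σ²/(Σᵢ sᵢ)² as r → 1 from the left; that is, the variance of the estimator of the variability weighted group effect τ_w strictly decreases in the multicollinearity level r, with limiting value σ²/(Σᵢ sᵢ)². -/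
/-!
The matrix `A(p,r) = (1 - r) I + r 𝟙𝟙ᵀ` is positive definite for `0 ≤ r < 1`, hence invertible,
and `𝟙` is an eigenvector with eigenvalue `1 + (p - 1) r`. The variability weights make
`S⁻¹ w_w = (Σ sᵢ)⁻¹ 𝟙`, so `Q_S(w_w, r) = (Σ sᵢ)⁻² 𝟙 ⬝ A⁻¹ 𝟙 = p / ((Σ sᵢ)² (1 + (p - 1) r))`,
which is visibly decreasing in `r` and continuous at `r = 1`.
-/

open Matrix Filter Topology

theorem Matrix.inv_mulVec_eq_inv_smul_of_mulVec_eq_smul {n K : Type*} [Fintype n]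
    [DecidableEq n] [Field K] {A : Matrix n n K} (hA : IsUnit A) {v : n → K} {c : K}
    (hc : c ≠ 0) (hv : A *ᵥ v = c • v) : A⁻¹ *ᵥ v = c⁻¹ • v := by
  have := hA.invertible
  refine inv_mulVec_eq_vec ?_
  rw [mulVec_smul, hv, smul_smul, inv_mul_cancel₀ hc, one_smul]

namespace unifMat

lemma eq_smul_one_add_smul_vecMulVec (p : ℕ) (r : ℝ) :
    unifMat p r = (1 - r) • 1 + r • vecMulVec 1 1 := by
  ext i j
  by_cases h : i = j <;> simp [unifMat, one_apply, h]

lemma posDef (p : ℕ) {r : ℝ} (hr0 : 0 ≤ r) (hr1 : r < 1) : (unifMat p r).PosDef := by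
  rw [eq_smul_one_add_smul_vecMulVec]
  exact (PosDef.one.smul (sub_pos.2 hr1)).add_posSemidef
    ((posSemidef_vecMulVec_self_star 1).smul hr0)

lemma mulVec_one (p : ℕ) (r : ℝ) : unifMat p r *ᵥ 1 = (1 + ((p : ℝ) - 1) * r) • 1 := by
  rw [eq_smul_one_add_smul_vecMulVec, add_mulVec, smul_mulVec, smul_mulVec,
    one_mulVec, vecMulVec_mulVec]
  ext i
  simp only [one_dotProduct_one, Fintype.card_fin, MulOpposite.op_natCast, Pi.add_apply,
    Pi.smul_apply, Pi.one_apply, smul_eq_mul, mul_one, MulOpposite.smul_eq_mul_unop,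
    MulOpposite.unop_natCast, one_mul]
  ring

lemma inv_mulVec_one (p : ℕ) {r : ℝ} (hr0 : 0 ≤ r) (hr1 : r < 1) :
    (unifMat p r)⁻¹ *ᵥ 1 = (1 + ((p : ℝ) - 1) * r)⁻¹ • 1 := by
  have hp : (0 : ℝ) ≤ p := p.cast_nonneg
  refine inv_mulVec_eq_inv_smul_of_mulVec_eq_smul (posDef p hr0 hr1).isUnit ?_ (mulVec_one p r)
  nlinarith

end unifMat

lemma QSform_self_div_sum (p : ℕ) {r : ℝ} (hr0 : 0 ≤ r) (hr1 : r < 1) {s : Fin p → ℝ}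
    (hs : ∀ i, s i ≠ 0) :
    QSform p r s (fun i => s i / ∑ j, s j) =
      (p : ℝ) / ((∑ i, s i) ^ 2 * (1 + ((p : ℝ) - 1) * r)) := by
  have hv : (fun i => s i / (∑ j, s j) / s i) = (∑ j, s j)⁻¹ • (1 : Fin p → ℝ) := by
    ext i
    simp [div_right_comm _ _ (s i), hs i]
  rw [QSform, hv, mulVec_smul, unifMat.inv_mulVec_one p hr0 hr1]
  simp only [dotProduct_smul, smul_dotProduct, one_dotProduct_one, Fintype.card_fin, smul_eq_mul]
  field_simp

/-- the function `r ↦ σ²·Q_S(w_w, r) = σ²p/((Σᵢ sᵢ)²(1+(p−1)r))`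
is strictly decreasing on `(0,1)` and tends to `σ²/(Σᵢ sᵢ)²` as `r → 1⁻`. -/
theorem QS_variability_weight_variance_decreasing (p : ℕ) (hp : 2 ≤ p)
    (s : Fin p → ℝ) (hs : ∀ i, 0 < s i) (σ2 : ℝ) (hσ2 : 0 < σ2) :
    (∀ r ∈ Set.Ioo (0 : ℝ) 1,
      σ2 * QSform p r s (fun i => s i / ∑ j, s j) =
        σ2 * (p : ℝ) / ((∑ i, s i) ^ 2 * (1 + ((p : ℝ) - 1) * r))) ∧
    StrictAntiOn (fun r : ℝ => σ2 * QSform p r s (fun i => s i / ∑ j, s j))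
      (Set.Ioo 0 1) ∧
    Tendsto (fun r : ℝ => σ2 * QSform p r s (fun i => s i / ∑ j, s j)) (𝓝[<] 1)
      (𝓝 (σ2 / (∑ i, s i) ^ 2)) := by
  have hp1 : (0 : ℝ) < p - 1 := by
    have : (2 : ℝ) ≤ p := by exact_mod_cast hp
    linarith
  have hsum : 0 < ∑ i, s i := Finset.sum_pos (fun i _ => hs i) ⟨⟨0, by omega⟩, Finset.mem_univ _⟩
  have formula : ∀ r ∈ Set.Ioo (0 : ℝ) 1, σ2 * QSform p r s (fun i => s i / ∑ j, s j) =
      σ2 * (p : ℝ) / ((∑ i, s i) ^ 2 * (1 + ((p : ℝ) - 1) * r)) := fun r hr => by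
    rw [QSform_self_div_sum p hr.1.le hr.2 fun i => (hs i).ne', mul_div_assoc]
  refine ⟨formula, fun x hx y hy hxy => ?_, ?_⟩
  · show σ2 * QSform p y s _ < σ2 * QSform p x s _
    rw [formula x hx, formula y hy]
    have hx_den : 0 < 1 + ((p : ℝ) - 1) * x := by nlinarith [hx.1]
    gcongr
  · set f : ℝ → ℝ := fun r => σ2 * p / ((∑ i, s i) ^ 2 * (1 + ((p : ℝ) - 1) * r))
    have hcont : ContinuousAt f 1 :=
      continuousAt_const.div (by fun_prop) (by positivity)
    have hf1 : f 1 = σ2 / (∑ i, s i) ^ 2 := by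
      simp only [f]
      field_simp
      ring
    rw [← hf1]
    refine (hcont.tendsto.mono_left nhdsWithin_le_nhds).congr' ?_
    filter_upwards [Ioo_mem_nhdsLT one_pos] with r hr using (formula r hr).symm
end
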